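/- Let L₁,…,L_l be three-wise linearly independent linear forms in S = k[x₀,x₁,x₂], l ≥ 2, and let d ≥ l − 1. Then dim_k (I_{𝕏(l)})_d = binom(d+2,2) − binom(l,2). -/

import Mathlib

open MvPolynomial Finset

/-- The (affine cone over the) vanishing ideal of a set `X ⊆ k³`: all polynomials in
`k[x₀,x₁,x₂]` vanishing at every point of `X`. -/
def vanishingIdealOf {k : Type*} [Field k] (X : Set (Fin 3 → k)) :
    Ideal (MvPolynomial (Fin 3) k) where
  carrier := {F | ∀ v ∈ X, eval v F = 0}
  zero_mem' := by intro v _; simp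
  add_mem' := by intro a b ha hb v hv; simp [ha v hv, hb v hv]
  smul_mem' := by intro c F hF v hv; simp [smul_eq_mul, hF v hv]

/-- The affine cone over the star configuration `𝕏(l)`: the set of nonzero vectors lying on
(at least) two of the lines `L_a = 0`, `L_b = 0` with `a ≠ b`. -/
def starCone {k : Type*} [Field k] {l : ℕ} (L : Fin l → MvPolynomial (Fin 3) k) :
    Set (Fin 3 → k) :=
  {v | v ≠ 0 ∧ ∃ a b : Fin l, a ≠ b ∧ eval v (L a) = 0 ∧ eval v (L b) = 0}

open Module

/-!
The points of `𝕏(l)` are represented by vectors `p_{ab}` with `L_a(p_{ab}) = L_b(p_{ab}) = 0`,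
unique up to scaling; by three-wise independence `p_{ab}` lies on no other line. A form of
degree `d` vanishes on the cone over `𝕏(l)` iff it vanishes at these representatives, so
`(I_{𝕏(l)})_d` is the kernel of evaluation `S_d → k^{binom(l,2)}`. This evaluation is
surjective: with `x_j(p_{ab}) ≠ 0`, the form `x_j^{d-l+2} ∏_{c ≠ a,b} L_c` is nonzero at
`p_{ab}` and vanishes at every other point. Rank–nullity gives the formula.
-/

namespace MvPolynomial

variable {σ R : Type*}

theorem IsHomogeneous.eval_smul [CommSemiring R] {F : MvPolynomial σ R} {n : ℕ}
    (hF : F.IsHomogeneous n) (c : R) (v : σ → R) :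
    eval (c • v) F = c ^ n * eval v F := by
  rw [eval_eq, eval_eq, mul_sum]
  refine sum_congr rfl fun m hm => ?_
  have hdeg : ∑ i ∈ m.support, m i = n := (hF.degree_eq_sum_deg_support hm).symm
  simp only [Pi.smul_apply, smul_eq_mul, mul_pow, prod_mul_distrib,
    prod_pow_eq_pow_sum, hdeg]
  ring

instance [Finite σ] [CommSemiring R] (n : ℕ) : Module.Finite R (homogeneousSubmodule σ R n) :=
  Module.Finite.iff_fg.2 (homogeneousSubmodule_fg σ R n)

theorem finrank_homogeneousSubmodule [Fintype σ] [CommRing R] [Nontrivial R] (n : ℕ) :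
    finrank R (homogeneousSubmodule σ R n) = (Fintype.card σ + n - 1).choose n := by
  classical
  have hdeg : {m : σ →₀ ℕ | m.degree = n} = ↑(univ.finsuppAntidiag n : Finset (σ →₀ ℕ)) := by
    ext m
    simp [mem_finsuppAntidiag, Finsupp.degree_eq_sum]
  rw [(LinearEquiv.ofEq _ _ (homogeneousSubmodule_eq_finsupp_supported σ R n)).finrank_eq,
    (AddMonoidAlgebra.supportedEquivFinsupp _).finrank_eq, hdeg]
  simp [card_finsuppAntidiag_nat_eq_choose]

theorem IsHomogeneous.eq_sum_coeff_single_smul_X [Fintype σ] [CommSemiring R]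
    {F : MvPolynomial σ R} (hF : F.IsHomogeneous 1) :
    F = ∑ i, coeff (Finsupp.single i 1) F • X i := by
  replace hF : F ∈ Submodule.span R (Set.range X) := by
    rwa [← homogeneousSubmodule_one_eq_span_X]
  induction hF using Submodule.span_induction with
  | mem x hx =>
    obtain ⟨j, rfl⟩ := hx
    classical
    simp [coeff_X, Finsupp.single_left_inj one_ne_zero]
  | zero => simp
  | add x y _ _ hx hy =>
    simp only [coeff_add, add_smul, sum_add_distrib, ← hx, ← hy]
  | smul c x _ hx =>
    simp only [coeff_smul, smul_eq_mul, mul_smul, ← smul_sum, ← hx]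

noncomputable def linearForm [Fintype σ] [CommSemiring R] :
    MvPolynomial σ R →ₗ[R] Dual R (σ → R) where
  toFun F := ∑ i, coeff (Finsupp.single i 1) F • LinearMap.proj i
  map_add' F G := by simp only [coeff_add, add_smul, sum_add_distrib]
  map_smul' c F := by simp only [coeff_smul, smul_eq_mul, mul_smul, smul_sum,
    RingHom.id_apply]

theorem linearForm_apply [Fintype σ] [CommSemiring R] (F : MvPolynomial σ R) (v : σ → R) :
    linearForm F v = ∑ i, coeff (Finsupp.single i 1) F * v i := by
  simp [linearForm]

theorem IsHomogeneous.eval_eq_linearForm [Fintype σ] [CommSemiring R] {F : MvPolynomial σ R}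
    (hF : F.IsHomogeneous 1) (v : σ → R) : eval v F = linearForm F v := by
  conv_lhs => rw [hF.eq_sum_coeff_single_smul_X]
  simp [linearForm_apply]

theorem linearIndependent_linearForm [Fintype σ] [CommRing R] {ι : Type*}
    {F : ι → MvPolynomial σ R} (hF : ∀ i, (F i).IsHomogeneous 1) (h : LinearIndependent R F) :
    LinearIndependent R (linearForm ∘ F) := by
  classical
  refine h.map (Submodule.disjoint_def.2 fun G hG hG0 => ?_)
  have hG1 : G ∈ homogeneousSubmodule σ R 1 :=
    Submodule.span_le.2 (by rintro _ ⟨i, rfl⟩; exact hF i) hG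
  rw [IsHomogeneous.eq_sum_coeff_single_smul_X hG1]
  refine sum_eq_zero fun i _ => ?_
  have := LinearMap.congr_fun (LinearMap.mem_ker.1 hG0) (Pi.single i 1)
  simp only [linearForm_apply, Pi.single_apply, mul_ite, mul_one, mul_zero, sum_ite_eq',
    mem_univ, ↓reduceIte, LinearMap.zero_apply] at this
  simp [this]

end MvPolynomial

section DualSpan

variable {k V ι : Type*} [Field k] [AddCommGroup V] [Module k V] {φ : ι → Dual k V}

theorem mem_dualCoannihilator_span_range {v : V} :
    v ∈ (Submodule.span k (Set.range φ)).dualCoannihilator ↔ ∀ i, φ i v = 0 := by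
  rw [← SetLike.mem_coe, Submodule.coe_dualCoannihilator_span]
  simp

theorem LinearIndependent.finrank_dualCoannihilator_span [FiniteDimensional k V] [Fintype ι]
    (h : LinearIndependent k φ) :
    finrank k (Submodule.span k (Set.range φ)).dualCoannihilator =
      finrank k V - Fintype.card ι := by
  have := Subspace.finrank_add_finrank_dualCoannihilator_eq (Submodule.span k (Set.range φ))
  rw [finrank_span_eq_card h] at this
  omega

theorem LinearIndependent.eq_zero_of_forall_apply_eq_zero [FiniteDimensional k V] [Fintype ι]
    (h : LinearIndependent k φ)
    (hcard : Fintype.card ι = finrank k V) {v : V} (hv : ∀ i, φ i v = 0) : v = 0 := by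
  have hv : v ∈ (Submodule.span k (Set.range φ)).dualCoannihilator :=
    mem_dualCoannihilator_span_range.2 hv
  have hbot : (Submodule.span k (Set.range φ)).dualCoannihilator = ⊥ :=
    Submodule.finrank_eq_zero.1 (by rw [h.finrank_dualCoannihilator_span, hcard, Nat.sub_self])
  rwa [hbot, Submodule.mem_bot] at hv

theorem LinearIndependent.exists_forall_eq_smul_of_card_add_one [FiniteDimensional k V]
    [Fintype ι] (h : LinearIndependent k φ)
    (hcard : Fintype.card ι + 1 = finrank k V) :
    ∃ p : V, p ≠ 0 ∧ (∀ i, φ i p = 0) ∧ ∀ v, (∀ i, φ i v = 0) → ∃ c : k, v = c • p := by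
  have hW : finrank k (Submodule.span k (Set.range φ)).dualCoannihilator = 1 := by
    rw [h.finrank_dualCoannihilator_span]; omega
  obtain ⟨⟨p, hp⟩, hp0, hspan⟩ := finrank_eq_one_iff'.1 hW
  refine ⟨p, by simpa using hp0, mem_dualCoannihilator_span_range.1 hp, fun v hv => ?_⟩
  obtain ⟨c, hc⟩ := hspan ⟨v, mem_dualCoannihilator_span_range.2 hv⟩
  exact ⟨c, by simpa using hc.symm⟩

end DualSpan

theorem LinearMap.range_eq_top_of_forall_exists_separating {K U ι : Type*} [Field K]
    [AddCommGroup U] [Module K U] [Finite ι] (e : U →ₗ[K] ι → K)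
    (h : ∀ i, ∃ u, e u i ≠ 0 ∧ ∀ j ≠ i, e u j = 0) : LinearMap.range e = ⊤ := by
  classical
  cases nonempty_fintype ι
  rw [eq_top_iff, ← (Pi.basisFun K ι).span_eq, Submodule.span_le]
  rintro _ ⟨i, rfl⟩
  obtain ⟨u, hui, hu⟩ := h i
  refine ⟨(e u i)⁻¹ • u, funext fun j => ?_⟩
  rcases eq_or_ne j i with rfl | hji
  · simp [hui]
  · simp [hu j hji, hji]

section StarConfiguration

abbrev LinePair (l : ℕ) := {s : Finset (Fin l) // s.card = 2}

variable {k : Type*} [Field k] {l : ℕ} {L : Fin l → MvPolynomial (Fin 3) k}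

theorem exists_star_point (hhom : ∀ i, (L i).IsHomogeneous 1)
    (h2 : ∀ a b : Fin l, a ≠ b → LinearIndependent k ![L a, L b])
    (h3 : ∀ a b c : Fin l, a ≠ b → a ≠ c → b ≠ c → LinearIndependent k ![L a, L b, L c])
    (s : LinePair l) :
    ∃ p : Fin 3 → k, p ≠ 0 ∧ (∀ i, eval p (L i) = 0 ↔ i ∈ s.1) ∧
      ∀ v, (∀ i ∈ s.1, eval v (L i) = 0) → ∃ c : k, v = c • p := by
  obtain ⟨a, b, hab, hs⟩ := card_eq_two.1 s.2
  have heval : ∀ i v, eval v (L i) = linearForm (L i) v := fun i =>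
    (hhom i).eval_eq_linearForm
  obtain ⟨p, hp0, hpab, hpspan⟩ :=
    (linearIndependent_linearForm (Fin.forall_fin_two.2 ⟨hhom a, hhom b⟩) (h2 a b hab)
      ).exists_forall_eq_smul_of_card_add_one (by simp)
  simp only [Fin.forall_fin_two, Function.comp_apply, Matrix.cons_val_zero,
    Matrix.cons_val_one] at hpab hpspan
  refine ⟨p, hp0, fun i => ⟨fun hi => ?_, fun hi => ?_⟩, fun v hv => hpspan v ?_⟩
  · by_contra his
    simp only [hs, mem_insert, mem_singleton, not_or] at his
    refine hp0 ((linearIndependent_linearForm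
      (by simp [Fin.forall_fin_succ, hhom]) (h3 a b i hab (Ne.symm his.1) (Ne.symm his.2))
      ).eq_zero_of_forall_apply_eq_zero (by simp) ?_)
    simp [Fin.forall_fin_succ, hpab, ← heval, hi]
  · simp only [hs, mem_insert, mem_singleton] at hi
    rcases hi with rfl | rfl
    exacts [heval i p ▸ hpab.1, heval i p ▸ hpab.2]
  · simpa [← heval] using ⟨hv a (by simp [hs]), hv b (by simp [hs])⟩

theorem mem_vanishingIdealOf_starCone_iff {p : LinePair l → Fin 3 → k}
    (hp0 : ∀ s, p s ≠ 0) (hpL : ∀ s, ∀ i ∈ s.1, eval (p s) (L i) = 0)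
    (hpspan : ∀ s v, (∀ i ∈ s.1, eval v (L i) = 0) → ∃ c : k, v = c • p s)
    {d : ℕ} {F : MvPolynomial (Fin 3) k} (hF : F.IsHomogeneous d) :
    F ∈ vanishingIdealOf (starCone L) ↔ ∀ s, eval (p s) F = 0 := by
  refine ⟨fun hF s => hF (p s) ⟨hp0 s, ?_⟩, fun hFp v ⟨_, a, b, hab, ha, hb⟩ => ?_⟩
  · obtain ⟨a, b, hab, hs⟩ := card_eq_two.1 s.2
    exact ⟨a, b, hab, hpL s a (by simp [hs]), hpL s b (by simp [hs])⟩
  · let s : LinePair l := ⟨{a, b}, card_pair hab⟩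
    obtain ⟨c, rfl⟩ := hpspan s v (by simp [s, ha, hb])
    rw [hF.eval_smul, hFp s, mul_zero]

theorem exists_isHomogeneous_separating_star_point
    {p : LinePair l → Fin 3 → k} (hhom : ∀ i, (L i).IsHomogeneous 1)
    (hpL : ∀ s i, eval (p s) (L i) = 0 ↔ i ∈ s.1) {d : ℕ} (hd : l - 2 ≤ d)
    (s₀ : LinePair l) (hp0 : p s₀ ≠ 0) :
    ∃ G : MvPolynomial (Fin 3) k, G.IsHomogeneous d ∧ eval (p s₀) G ≠ 0 ∧
      ∀ s ≠ s₀, eval (p s) G = 0 := by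
  obtain ⟨j, hj⟩ := Function.ne_iff.1 hp0
  have hcard : (univ \ s₀.1).card = l - 2 := by
    rw [card_sdiff_of_subset (subset_univ _), s₀.2, card_univ, Fintype.card_fin]
  refine ⟨(∏ c ∈ univ \ s₀.1, L c) * X j ^ (d - (l - 2)), ?_, ?_, fun s hs => ?_⟩
  · convert (IsHomogeneous.prod _ _ (fun _ => 1) fun i _ => hhom i).mul (isHomogeneous_X_pow j _)
    simp only [sum_const, hcard, smul_eq_mul, mul_one]
    omega
  · simp only [eval_mul, eval_pow, eval_X, map_prod]
    refine mul_ne_zero (prod_ne_zero_iff.2 fun c hc => ?_) (pow_ne_zero _ hj)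
    rw [Ne, hpL]
    exact (mem_sdiff.1 hc).2
  · obtain ⟨c, hcs, hcs₀⟩ : ∃ c ∈ s.1, c ∉ s₀.1 := by
      by_contra! h
      exact hs (Subtype.ext (eq_of_subset_of_card_le h (by rw [s.2, s₀.2])))
    rw [eval_mul, map_prod, prod_eq_zero (i := c) (by simpa using hcs₀) ((hpL s c).2 hcs),
      zero_mul]

end StarConfiguration

theorem dim_vanishingIdeal_degree_d_general {k : Type*} [Field k]
    (l d : ℕ) (hd : l - 1 ≤ d) (L : Fin l → MvPolynomial (Fin 3) k)
    (hhom : ∀ i, (L i).IsHomogeneous 1)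
    (h2 : ∀ a b : Fin l, a ≠ b → LinearIndependent k ![L a, L b])
    (h3 : ∀ a b c : Fin l, a ≠ b → a ≠ c → b ≠ c → LinearIndependent k ![L a, L b, L c]) :
    Module.finrank k
      ↥(Submodule.comap (homogeneousSubmodule (Fin 3) k d).subtype
          (Submodule.restrictScalars k (vanishingIdealOf (starCone L)))) =
      (d + 2).choose 2 - l.choose 2 := by
  choose p hp0 hpL hpspan using exists_star_point hhom h2 h3
  let ev : homogeneousSubmodule (Fin 3) k d →ₗ[k] (LinePair l → k) :=
    (LinearMap.pi fun s => (aeval (p s)).toLinearMap).comp (Submodule.subtype _)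
  have hker : LinearMap.ker ev = Submodule.comap (homogeneousSubmodule (Fin 3) k d).subtype
      (Submodule.restrictScalars k (vanishingIdealOf (starCone L))) := by
    ext ⟨F, hF⟩
    simp [ev, mem_vanishingIdealOf_starCone_iff hp0 (fun s i => (hpL s i).2) hpspan hF, funext_iff]
  have hrange : LinearMap.range ev = ⊤ := by
    refine LinearMap.range_eq_top_of_forall_exists_separating ev fun s₀ => ?_
    obtain ⟨G, hG, hGs₀, hGs⟩ := exists_isHomogeneous_separating_star_point hhom hpL
      (d := d) (by omega) s₀ (hp0 s₀)
    exact ⟨⟨G, hG⟩, by simpa [ev] using hGs₀, fun s hs => by simpa [ev] using hGs s hs⟩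
  have hrank := ev.finrank_range_add_finrank_ker
  rw [hrange, hker, finrank_top, finrank_pi, Fintype.card_finset_len, Fintype.card_fin,
    finrank_homogeneousSubmodule, Fintype.card_fin] at hrank
  have : (3 + d - 1).choose d = (d + 2).choose 2 := by
    rw [show 3 + d - 1 = d + 2 by omega, Nat.choose_symm_add]
  omega

/-- For `d ≥ l − 1`, the degree-`d` graded component of the vanishing
ideal of the star configuration `𝕏(l)` has dimension `binom(d+2,2) − binom(l,2)`. -/
theorem dim_vanishingIdeal_degree_d {k : Type*} [Field k] [IsAlgClosed k]
    (l d : ℕ) (hl : 2 ≤ l) (hd : l - 1 ≤ d) (L : Fin l → MvPolynomial (Fin 3) k)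
    (hhom : ∀ i, (L i).IsHomogeneous 1)
    (h2 : ∀ a b : Fin l, a ≠ b → LinearIndependent k ![L a, L b])
    (h3 : ∀ a b c : Fin l, a ≠ b → a ≠ c → b ≠ c → LinearIndependent k ![L a, L b, L c]) :
    Module.finrank k
      ↥(Submodule.comap (homogeneousSubmodule (Fin 3) k d).subtype
          (Submodule.restrictScalars k (vanishingIdealOf (starCone L)))) =
      (d + 2).choose 2 - l.choose 2 :=
  dim_vanishingIdeal_degree_d_general l d hd L hhom h2 h3
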